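/- arXiv:2106.01224 — 2 statements merged into one kernel-verified Lean document; each statement's English description precedes it below -/
import Mathlib

section
/- A BST-conjunction Φ over a finite set V of variables is satisfiable if and only if there exists a map 𝔉 : V → pow(pow⁺(V)) that fulfills Φ. -/
namespace BSTO

/-- The unordered Cartesian product `s ⊗ t = {{u,v} | u ∈ s, v ∈ t}`, as a class of ZFC sets. -/
def uprod (s t : ZFSet) : Set ZFSet := {w | ∃ u ∈ s, ∃ v ∈ t, w = ({u, v} : ZFSet)}

/-- A partition: a collection of pairwise disjoint nonempty sets. -/
def IsPartition (S : ZFSet) : Prop :=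
  (∀ b, b ∈ S → b ≠ (∅ : ZFSet)) ∧
    ∀ b, b ∈ S → ∀ c, c ∈ S → b ≠ c → ∀ t, t ∈ b → t ∉ c

/-- `Pow*₁,₂ B`: members of the intersecting power set of `B` of cardinality 1 or 2. -/
def powAst12 (B : ZFSet) : Set ZFSet :=
  {t | t ⊆ ZFSet.sUnion B ∧ (∀ s, s ∈ B → ∃ u, u ∈ t ∧ u ∈ s) ∧ ∃ u v : ZFSet, t = {u, v}}

/-- BST⊗-formulae. -/
inductive Fmla (V : Type) : Type
  | eqUnion (x y z : V)
  | eqInter (x y z : V)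
  | eqDiff  (x y z : V)
  | eqUprod (x y z : V)
  | subset  (x y : V)
  | not (φ : Fmla V)
  | and (φ ψ : Fmla V)
  | or (φ ψ : Fmla V)

def Fmla.Sat {V : Type} (M : V → ZFSet) : Fmla V → Prop
  | .eqUnion x y z => M x = M y ∪ M z
  | .eqInter x y z => M x = M y ∩ M z
  | .eqDiff x y z  => M x = M y \ M z
  | .eqUprod x y z => (M x).toSet = uprod (M y) (M z)
  | .subset x y    => M x ⊆ M y
  | .not φ         => ¬ Fmla.Sat M φ
  | .and φ ψ       => Fmla.Sat M φ ∧ Fmla.Sat M ψ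
  | .or φ ψ        => Fmla.Sat M φ ∨ Fmla.Sat M ψ

/-- A partition `S` satisfies `φ` if the set assignment induced by some
partition assignment `J` (mapping variables to sets of blocks) models `φ`. -/
def SatByPartition {V : Type} (S : ZFSet) (φ : Fmla V) : Prop :=
  ∃ J : V → ZFSet, (∀ v, J v ⊆ S) ∧ Fmla.Sat (fun v => ZFSet.sUnion (J v)) φ

/-- BST literals. -/
inductive BSTLit (V : Type) : Type
  | eqUnion (x y z : V)
  | eqDiff  (x y z : V)
  | ne (x y : V)

def BSTLit.Sat {V : Type} (M : V → ZFSet) : BSTLit V → Prop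
  | .eqUnion x y z => M x = M y ∪ M z
  | .eqDiff x y z  => M x = M y \ M z
  | .ne x y        => M x ≠ M y

/-- A map `F : V → pow(pow⁺ V)` fulfills a BST literal. -/
def BSTLit.FulfilledBy {V : Type} (F : V → Set (Set V)) : BSTLit V → Prop
  | .eqUnion x y z => F x = F y ∪ F z
  | .eqDiff x y z  => F x = F y \ F z
  | .ne x y        => F x ≠ F y

/-- BST⊗ literals. -/
inductive Lit (V : Type) : Type
  | eqUnion (x y z : V)
  | eqDiff  (x y z : V)
  | eqUprod (x y z : V)
  | ne (x y : V)

def Lit.Sat {V : Type} (M : V → ZFSet) : Lit V → Prop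
  | .eqUnion x y z => M x = M y ∪ M z
  | .eqDiff x y z  => M x = M y \ M z
  | .eqUprod x y z => (M x).toSet = uprod (M y) (M z)
  | .ne x y        => M x ≠ M y

/-- The nodes over a set of places: nonempty subsets of cardinality at most 2. -/
def NodesOf (P : Type) : Set (Set P) := {A | ∃ p q : P, A = {p, q}}

/-- Unordered product of two sets of places: the set of nodes `{u,v}`, `u ∈ s`, `v ∈ t`. -/
def setUprod {P : Type} (s t : Set P) : Set (Set P) := {A | ∃ u ∈ s, ∃ v ∈ t, A = {u, v}}

/-- Accessibility of a place from the source places, w.r.t. a target map `T`. -/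
inductive Accessible {P : Type} (T : Set P → Set P) : P → Prop
  | source (p : P) (h : ∀ A ∈ NodesOf P, p ∉ T A) : Accessible T p
  | step (p : P) (A : Set P) (hA : A ∈ NodesOf P)
      (hacc : ∀ q ∈ A, Accessible T q) (hp : p ∈ T A) : Accessible T p

/-- Conditions (a), (b), (c1)-(c3) for a literal, w.r.t. a ⊗-graph with target map `T`
and a candidate fulfilling map `F`. -/
def Lit.GraphFulfilled {P V : Type} (T : Set P → Set P) (F : V → Set P) : Lit V → Prop
  | .eqUnion x y z => F x = F y ∪ F z
  | .eqDiff x y z  => F x = F y \ F z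
  | .ne x y        => F x ≠ F y
  | .eqUprod x y z =>
      (∀ υ ∈ F y, ∀ ζ ∈ F z, (T {υ, ζ}).Nonempty ∧ T {υ, ζ} ⊆ F x) ∧
      F x ⊆ (⋃ A ∈ setUprod (F y) (F z), T A) ∧
      (⋃ A ∈ NodesOf P \ setUprod (F y) (F z), T A) ∩ F x = ∅

/-- A ⊗-graph (given by its target map `T`) fulfills the conjunction `Φ` via `F`. -/
def Fulfills {P V : Type} (T : Set P → Set P) (F : V → Set P) (Φ : List (Lit V)) : Prop :=
  ∀ l ∈ Φ, Lit.GraphFulfilled T F l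

/-- `S'` is a ⊗-subpartition of the partition `S`. -/
def OSubpart (S : ZFSet) (S' : Set ZFSet) : Prop :=
  S' ⊆ S.toSet ∧ ∃ B : Set ZFSet,
    (∀ b ∈ B, ∃ p, p ∈ S ∧ ∃ q, q ∈ S ∧ b = ({p, q} : ZFSet)) ∧
    (⋃ c ∈ S', c.toSet) = ⋃ b ∈ B, powAst12 b

/-- `Σ_⊗`: the maximal ⊗-subpartition of `S` (the union of all ⊗-subpartitions). -/
def sigmaOtimes (S : ZFSet) : Set ZFSet := {b | ∃ S', OSubpart S S' ∧ b ∈ S'}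

/-- The target map of the ⊗-graph induced by a partition `S` via the bijection `e`,
relative to the set `Pi` of ⊗-upblocks. -/
def inducedT (S : ZFSet) {P : Type} (e : P ≃ S.toSet) (Pi : Set ZFSet) (A : Set P) :
    Set P :=
  {q | ∃ p₁ p₂ : P, A = {p₁, p₂} ∧ ({(e p₁ : ZFSet), (e p₂ : ZFSet)} : ZFSet) ∈ Pi ∧
    (e q : ZFSet) ∈ sigmaOtimes S ∧
    ((e q : ZFSet).toSet ∩ powAst12 ({(e p₁ : ZFSet), (e p₂ : ZFSet)} : ZFSet)).Nonempty}

/-- `m` is the maximum of `Sp` w.r.t. the strict order `r`. -/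
def IsMaxIn {P : Type} (r : P → P → Prop) (Sp : Set P) (m : P) : Prop :=
  m ∈ Sp ∧ ∀ p ∈ Sp, p = m ∨ r p m

/-- `r` is a topological ⊗-order for the ⊗-graph with target map `T`:
a strict total order on places with `max A ≺ max T(A)` for every ⊗-node `A`. -/
def IsTopOOrder {P : Type} (T : Set P → Set P) (r : P → P → Prop) : Prop :=
  (∀ a, ¬ r a a) ∧ (∀ a b c, r a b → r b c → r a c) ∧ (∀ a b, a ≠ b → r a b ∨ r b a) ∧
  ∀ A ∈ NodesOf P, (T A).Nonempty →
    ∃ m m', IsMaxIn r A m ∧ IsMaxIn r (T A) m' ∧ r m m'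

/-- Hereditarily finite ZFC sets. -/
inductive IsHF : ZFSet → Prop
  | mk (x : ZFSet) (hfin : x.toSet.Finite) (hmem : ∀ y ∈ x, IsHF y) : IsHF x

/-! A set assignment `M` is recovered from the map `v ↦ {π a | a ∈ M v}` as its preimage under
the Venn-region map `π a = {v | a ∈ M v}`; preimages commute with `∪` and `\`, and are injective
on subsets of the range, so the literals of `Φ` transfer both ways. Conversely, a fulfilling map
becomes a set assignment once the subsets of `V` are coded injectively by ZF sets (ordinals). -/

namespace BSTLit

/-- The set-theoretic meaning of a literal, common to `BSTLit.Sat` (on the extensions of a set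
assignment) and `BSTLit.FulfilledBy`. -/
def Holds {V : Type} {α : Type*} (F : V → Set α) : BSTLit V → Prop
  | .eqUnion x y z => F x = F y ∪ F z
  | .eqDiff x y z  => F x = F y \ F z
  | .ne x y        => F x ≠ F y

variable {V : Type} {α β : Type*}

theorem fulfilledBy_iff_holds (F : V → Set (Set V)) (l : BSTLit V) :
    l.FulfilledBy F ↔ l.Holds F := by
  cases l <;> rfl

theorem sat_iff_holds_coe (M : V → ZFSet) (l : BSTLit V) :
    l.Sat M ↔ l.Holds (fun v => (M v : Set ZFSet)) := by
  cases l <;>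
    simp only [Sat, Holds, ← ZFSet.coe_union, ← ZFSet.coe_sdiff, ne_eq, SetLike.coe_set_eq]

theorem holds_preimage_iff {g : α → β} {F : V → Set β} (hF : ∀ v, F v ⊆ Set.range g)
    (l : BSTLit V) : l.Holds (fun v => g ⁻¹' F v) ↔ l.Holds F := by
  cases l with
  | eqUnion x y z =>
    simp only [Holds, ← Set.preimage_union]
    exact Set.preimage_eq_preimage' (hF x) (Set.union_subset (hF y) (hF z))
  | eqDiff x y z =>
    simp only [Holds, ← Set.preimage_sdiff]
    exact Set.preimage_eq_preimage' (hF x) (Set.sdiff_subset.trans (hF y))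
  | ne x y => exact (Set.preimage_eq_preimage' (hF x) (hF y)).not

theorem holds_image_iff {g : α → β} (hg : g.Injective) (F : V → Set α) (l : BSTLit V) :
    l.Holds (fun v => g '' F v) ↔ l.Holds F := by
  rw [← holds_preimage_iff (fun v => Set.image_subset_range g (F v))]
  simp only [Set.preimage_image_eq _ hg]

end BSTLit

def vennRegion {V α : Type*} (M : V → Set α) (a : α) : Set V := {v | a ∈ M v}

theorem preimage_image_vennRegion {V α : Type*} (M : V → Set α) (v : V) :
    vennRegion M ⁻¹' (vennRegion M '' M v) = M v := by
  refine Set.Subset.antisymm ?_ (Set.subset_preimage_image _ _)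
  rintro a ⟨b, hb, hab⟩
  change v ∈ vennRegion M a
  exact hab ▸ hb

universe u v

noncomputable def ordinalCode (α : Type v) (a : α) : ZFSet.{max u v} :=
  (Ordinal.lift.{u} (Ordinal.typein (WellOrderingRel : α → α → Prop) a)).toZFSet

theorem ordinalCode_injective (α : Type v) : (ordinalCode.{u} α).Injective :=
  fun _ _ h => Ordinal.typein_injective _ (Ordinal.lift_inj.1 (Ordinal.toZFSet_injective h))

theorem stmt4_general {V : Type} (Φ : List (BSTLit V)) :
    (∃ M : V → ZFSet, ∀ l ∈ Φ, BSTLit.Sat M l) ↔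
      ∃ F : V → Set (Set V), (∀ v, ∀ s ∈ F v, s.Nonempty) ∧
        ∀ l ∈ Φ, BSTLit.FulfilledBy F l := by
  simp only [BSTLit.sat_iff_holds_coe, BSTLit.fulfilledBy_iff_holds]
  constructor
  · rintro ⟨M, hM⟩
    let π := vennRegion fun v => (M v : Set ZFSet)
    refine ⟨fun v => π '' M v, fun v s ⟨a, ha, hs⟩ => hs ▸ ⟨v, ha⟩, fun l hl => ?_⟩
    rw [← BSTLit.holds_preimage_iff (fun v => Set.image_subset_range π _)]
    simpa only [π, preimage_image_vennRegion] using hM l hl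
  · rintro ⟨F, -, hF⟩
    refine ⟨fun v => ZFSet.range fun s : F v => ordinalCode (Set V) s, fun l hl => ?_⟩
    simpa only [ZFSet.coe_range, ← Set.image_eq_range] using
      (BSTLit.holds_image_iff (ordinalCode_injective _) F l).2 (hF l hl)

/-- a BST-conjunction over a finite set `V` of variables is satisfiable
iff there is a fulfilling map `F : V → pow(pow⁺ V)`. -/
theorem stmt4 {V : Type} [Finite V] (Φ : List (BSTLit V)) :
    (∃ M : V → ZFSet, ∀ l ∈ Φ, BSTLit.Sat M l) ↔
      ∃ F : V → Set (Set V), (∀ v, ∀ s ∈ F v, s.Nonempty) ∧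
        ∀ l ∈ Φ, BSTLit.FulfilledBy F l :=
  stmt4_general Φ

end BSTO
end

section
/- Let Σ be a partition satisfying a BST⊗-conjunction Φ via a partition assignment 𝔍. Then the accessible ⊗-graph G_Σ induced by Σ fulfills Φ via the map 𝔉_Σ(x) := { q : q• ∈ 𝔍(x) }. -/
namespace BSTO

/-! Blocks of a partition are nonempty and pairwise disjoint, so a block lies in a set `J` of
blocks as soon as one of its elements lies in `⋃ J`; this transfers the Boolean literals from
`M_𝔍` to `𝔉_Σ`. For a literal `x = y ⊗ z`, the key observations are that `Pow*₁,₂ {b₁, b₂}` is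
just `b₁ ⊗ b₂`, and that a pair `t` lies in `b₁ ⊗ b₂` for at most one pair `{b₁, b₂}` of blocks.
Hence `𝔍(x)` is itself a ⊗-subpartition (so its blocks lie in `Σ_⊗`), and the targets of a node
`{υ, ζ}` are exactly the blocks of `Σ_⊗` meeting `υ• ⊗ ζ•`. -/

open Function

lemma pair_eq_pair_iff_of_injective {P : Type} {f : P → ZFSet} (hf : Injective f)
    {a b c d : P} :
    ({f a, f b} : ZFSet) = {f c, f d} ↔ ({a, b} : Set P) = {c, d} := by
  rw [← SetLike.coe_set_eq, ZFSet.coe_insert, ZFSet.coe_singleton, ZFSet.coe_insert,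
    ZFSet.coe_singleton, ← Set.image_pair, ← Set.image_pair, (Set.image_injective.2 hf).eq_iff]

lemma mem_uprod_sUnion {Y Z t : ZFSet} :
    t ∈ uprod (ZFSet.sUnion Y) (ZFSet.sUnion Z) ↔ ∃ b₁ ∈ Y, ∃ b₂ ∈ Z, t ∈ uprod b₁ b₂ := by
  simp only [uprod, Set.mem_ofPred_eq, ZFSet.mem_sUnion]
  constructor
  · rintro ⟨u, ⟨b₁, hb₁, hu⟩, v, ⟨b₂, hb₂, hv⟩, rfl⟩
    exact ⟨b₁, hb₁, b₂, hb₂, u, hu, v, hv, rfl⟩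
  · rintro ⟨b₁, hb₁, b₂, hb₂, u, hu, v, hv, rfl⟩
    exact ⟨u, ⟨b₁, hb₁, hu⟩, v, ⟨b₂, hb₂, hv⟩, rfl⟩

lemma powAst12_pair (b₁ b₂ : ZFSet) : powAst12 {b₁, b₂} = uprod b₁ b₂ := by
  ext t
  constructor
  · rintro ⟨ht, hmeet, a, c, rfl⟩
    have hcover : ∀ w ∈ ({a, c} : ZFSet), w ∈ b₁ ∨ w ∈ b₂ := fun w hw => by
      simpa using ht hw
    have ha := hcover a (by simp)
    have hc := hcover c (by simp)
    have h₁ : a ∈ b₁ ∨ c ∈ b₁ := by simpa using hmeet b₁ (by simp)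
    have h₂ : a ∈ b₂ ∨ c ∈ b₂ := by simpa using hmeet b₂ (by simp)
    have : (a ∈ b₁ ∧ c ∈ b₂) ∨ (c ∈ b₁ ∧ a ∈ b₂) := by tauto
    rcases this with ⟨ha₁, hc₂⟩ | ⟨hc₁, ha₂⟩
    · exact ⟨a, ha₁, c, hc₂, rfl⟩
    · exact ⟨c, hc₁, a, ha₂, by ext; simp [or_comm]⟩
  · rintro ⟨u, hu, v, hv, rfl⟩
    refine ⟨fun w hw => ?_, fun s hs => ?_, u, v, rfl⟩
    · rcases ZFSet.mem_pair.1 hw with rfl | rfl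
      · exact ZFSet.mem_sUnion.2 ⟨b₁, by simp, hu⟩
      · exact ZFSet.mem_sUnion.2 ⟨b₂, by simp, hv⟩
    · rcases ZFSet.mem_pair.1 hs with rfl | rfl
      · exact ⟨u, by simp, hu⟩
      · exact ⟨v, by simp, hv⟩

lemma pair_subset_of_mem {S b₁ b₂ : ZFSet} (hb₁ : b₁ ∈ S) (hb₂ : b₂ ∈ S) :
    ({b₁, b₂} : ZFSet) ⊆ S := fun d hd => by
  rcases ZFSet.mem_pair.1 hd with rfl | rfl <;> assumption

namespace IsPartition

variable {S : ZFSet} (hS : IsPartition S)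
include hS

lemma exists_mem {b : ZFSet} (hb : b ∈ S) : ∃ t, t ∈ b :=
  (ZFSet.eq_empty_or_nonempty b).resolve_left (hS.1 b hb)

lemma eq_of_mem_of_mem {b c t : ZFSet} (hb : b ∈ S) (hc : c ∈ S) (htb : t ∈ b)
    (htc : t ∈ c) : b = c := by
  by_contra hne
  exact hS.2 b hb c hc hne t htb htc

lemma mem_iff_mem_sUnion {J b t : ZFSet} (hJ : J ⊆ S) (hb : b ∈ S) (ht : t ∈ b) :
    b ∈ J ↔ t ∈ ZFSet.sUnion J := by
  refine ⟨fun h => ZFSet.mem_sUnion.2 ⟨b, h, ht⟩, fun h => ?_⟩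
  obtain ⟨c, hc, htc⟩ := ZFSet.mem_sUnion.1 h
  rwa [hS.eq_of_mem_of_mem hb (hJ hc) ht htc]

lemma subset_of_mem_powAst12 {B C t : ZFSet} (hB : B ⊆ S) (hC : C ⊆ S)
    (htB : t ∈ powAst12 B) (htC : t ∈ powAst12 C) : B ⊆ C := fun d hd => by
  obtain ⟨u, hut, hud⟩ := htB.2.1 d hd
  obtain ⟨c, hc, huc⟩ := ZFSet.mem_sUnion.1 (htC.1 hut)
  rwa [hS.eq_of_mem_of_mem (hB hd) (hC hc) hud huc]

lemma eq_of_mem_powAst12 {B C t : ZFSet} (hB : B ⊆ S) (hC : C ⊆ S)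
    (htB : t ∈ powAst12 B) (htC : t ∈ powAst12 C) : B = C :=
  le_antisymm (hS.subset_of_mem_powAst12 hB hC htB htC)
    (hS.subset_of_mem_powAst12 hC hB htC htB)

lemma pair_eq_of_mem_uprod {b₁ b₂ c₁ c₂ t : ZFSet} (hb₁ : b₁ ∈ S) (hb₂ : b₂ ∈ S)
    (hc₁ : c₁ ∈ S) (hc₂ : c₂ ∈ S) (htb : t ∈ uprod b₁ b₂) (htc : t ∈ uprod c₁ c₂) :
    ({b₁, b₂} : ZFSet) = {c₁, c₂} := by
  rw [← powAst12_pair] at htb htc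
  exact hS.eq_of_mem_powAst12 (pair_subset_of_mem hb₁ hb₂) (pair_subset_of_mem hc₁ hc₂) htb htc

end IsPartition

lemma oSubpart_of_sUnion_eq_uprod {S X Y Z : ZFSet} (hX : X ⊆ S) (hY : Y ⊆ S) (hZ : Z ⊆ S)
    (h : (ZFSet.sUnion X).toSet = uprod (ZFSet.sUnion Y) (ZFSet.sUnion Z)) :
    OSubpart S {c | c ∈ X} := by
  refine ⟨fun c hc => hX hc, {b | ∃ b₁ ∈ Y, ∃ b₂ ∈ Z, b = {b₁, b₂}}, ?_, ?_⟩
  · rintro b ⟨b₁, hb₁, b₂, hb₂, rfl⟩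
    exact ⟨b₁, hY hb₁, b₂, hZ hb₂, rfl⟩
  · ext t
    have hX : (∃ c ∈ X, t ∈ c) ↔ ∃ b₁ ∈ Y, ∃ b₂ ∈ Z, t ∈ uprod b₁ b₂ := by
      rw [← mem_uprod_sUnion, ← h, ← ZFSet.mem_sUnion]; rfl
    simp only [Set.mem_iUnion, exists_prop]
    refine hX.trans ⟨?_, ?_⟩
    · rintro ⟨b₁, hb₁, b₂, hb₂, htb⟩
      exact ⟨_, ⟨b₁, hb₁, b₂, hb₂, rfl⟩, by rwa [powAst12_pair]⟩
    · rintro ⟨_, ⟨b₁, hb₁, b₂, hb₂, rfl⟩, htb⟩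
      exact ⟨b₁, hb₁, b₂, hb₂, by rwa [← powAst12_pair]⟩

section InducedGraph

variable {S : ZFSet} {P : Type} (e : P ≃ S.toSet) {Pi : Set ZFSet}

lemma exists_place_eq {b : ZFSet} (hb : b ∈ S) : ∃ p, (e p : ZFSet) = b :=
  ⟨e.symm ⟨b, hb⟩, by simp⟩

lemma place_injective : Injective fun p => (e p : ZFSet) :=
  Subtype.coe_injective.comp e.injective

variable (hS : IsPartition S)
  (hPi1 : ∀ b ∈ Pi, ∃ p, p ∈ S ∧ ∃ q, q ∈ S ∧ b = ({p, q} : ZFSet))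
  (hPi2 : (⋃ c ∈ sigmaOtimes S, c.toSet) = ⋃ b ∈ Pi, powAst12 b)
include hS hPi1 hPi2

lemma pair_mem_Pi {b₁ b₂ c t : ZFSet} (hb₁ : b₁ ∈ S) (hb₂ : b₂ ∈ S)
    (hc : c ∈ sigmaOtimes S) (htc : t ∈ c) (ht : t ∈ uprod b₁ b₂) :
    ({b₁, b₂} : ZFSet) ∈ Pi := by
  have ht' : t ∈ ⋃ b ∈ Pi, powAst12 b := hPi2 ▸ Set.mem_biUnion hc htc
  obtain ⟨b, hb, htb⟩ := Set.mem_iUnion₂.1 ht'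
  obtain ⟨c₁, hc₁, c₂, hc₂, rfl⟩ := hPi1 b hb
  rwa [hS.pair_eq_of_mem_uprod hb₁ hb₂ hc₁ hc₂ ht (by rwa [← powAst12_pair])]

lemma mem_inducedT_pair_iff {p₁ p₂ q : P} :
    q ∈ inducedT S e Pi {p₁, p₂} ↔
      (e q : ZFSet) ∈ sigmaOtimes S ∧ ∃ t ∈ (e q : ZFSet), t ∈ uprod (e p₁) (e p₂) := by
  constructor
  · rintro ⟨p₁', p₂', hA, -, hσ, t, ht, htp⟩
    rw [← (pair_eq_pair_iff_of_injective (place_injective e)).2 hA, powAst12_pair] at htp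
    exact ⟨hσ, t, ht, htp⟩
  · rintro ⟨hσ, t, ht, htp⟩
    exact ⟨p₁, p₂, rfl, pair_mem_Pi hS hPi1 hPi2 (e p₁).2 (e p₂).2 hσ ht htp, hσ, t, ht,
      by rwa [powAst12_pair]⟩

end InducedGraph

section Fulfillment

variable {V : Type} {S : ZFSet} {P : Type}

def inducedF (e : P ≃ S.toSet) (J : V → ZFSet) (x : V) : Set P := {q | (e q : ZFSet) ∈ J x}

variable {e : P ≃ S.toSet} {J : V → ZFSet}

lemma mem_sUnion_of_mem_uprod {x y z : V}
    (hm : (ZFSet.sUnion (J x)).toSet = uprod (ZFSet.sUnion (J y)) (ZFSet.sUnion (J z)))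
    {υ ζ : P} {t : ZFSet} (hυ : υ ∈ inducedF e J y)
    (hζ : ζ ∈ inducedF e J z) (ht : t ∈ uprod (e υ) (e ζ)) : t ∈ ZFSet.sUnion (J x) := by
  have ht' : t ∈ uprod (ZFSet.sUnion (J y)) (ZFSet.sUnion (J z)) :=
    mem_uprod_sUnion.2 ⟨_, hυ, _, hζ, ht⟩
  rwa [← hm] at ht'

variable (hJ : ∀ v, J v ⊆ S)
include hJ

lemma eq_of_inducedF_eq {x y : V} (h : inducedF e J x = inducedF e J y) : J x = J y := by
  have key : ∀ {x y : V}, inducedF e J x ⊆ inducedF e J y → J x ⊆ J y := fun hxy b hb => by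
    obtain ⟨p, rfl⟩ := exists_place_eq e (hJ _ hb)
    exact hxy hb
  exact le_antisymm (key h.le) (key h.ge)

section Boolean

variable (hS : IsPartition S)
include hS

lemma mem_inducedF_iff {x : V} {q : P} {t : ZFSet} (ht : t ∈ (e q : ZFSet)) :
    q ∈ inducedF e J x ↔ t ∈ ZFSet.sUnion (J x) :=
  hS.mem_iff_mem_sUnion (hJ x) (e q).2 ht

lemma inducedF_eq_union {x y z : V}
    (h : ZFSet.sUnion (J x) = ZFSet.sUnion (J y) ∪ ZFSet.sUnion (J z)) :
    inducedF e J x = inducedF e J y ∪ inducedF e J z := by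
  ext q
  obtain ⟨t, ht⟩ := hS.exists_mem (e q).2
  rw [Set.mem_union, mem_inducedF_iff hJ hS ht, mem_inducedF_iff hJ hS ht,
    mem_inducedF_iff hJ hS ht, h, ZFSet.mem_union]

lemma inducedF_eq_diff {x y z : V}
    (h : ZFSet.sUnion (J x) = ZFSet.sUnion (J y) \ ZFSet.sUnion (J z)) :
    inducedF e J x = inducedF e J y \ inducedF e J z := by
  ext q
  obtain ⟨t, ht⟩ := hS.exists_mem (e q).2
  rw [Set.mem_sdiff, mem_inducedF_iff hJ hS ht, mem_inducedF_iff hJ hS ht,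
    mem_inducedF_iff hJ hS ht, h, ZFSet.mem_sdiff]

end Boolean

section Uprod

variable {x y z : V}
  (hm : (ZFSet.sUnion (J x)).toSet = uprod (ZFSet.sUnion (J y)) (ZFSet.sUnion (J z)))
include hm

lemma mem_sigmaOtimes_of_mem_inducedF {q : P} (hq : q ∈ inducedF e J x) :
    (e q : ZFSet) ∈ sigmaOtimes S :=
  ⟨_, oSubpart_of_sUnion_eq_uprod (hJ x) (hJ y) (hJ z) hm, hq⟩

lemma exists_places_of_mem_inducedF {q : P} {t : ZFSet} (hq : q ∈ inducedF e J x)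
    (ht : t ∈ (e q : ZFSet)) :
    ∃ υ ∈ inducedF e J y, ∃ ζ ∈ inducedF e J z, t ∈ uprod (e υ) (e ζ) := by
  have ht' : t ∈ uprod (ZFSet.sUnion (J y)) (ZFSet.sUnion (J z)) := by
    rw [← hm]
    exact ZFSet.mem_sUnion.2 ⟨_, hq, ht⟩
  obtain ⟨b₁, hb₁, b₂, hb₂, htb⟩ := mem_uprod_sUnion.1 ht'
  obtain ⟨υ, rfl⟩ := exists_place_eq e (hJ y hb₁)
  obtain ⟨ζ, rfl⟩ := exists_place_eq e (hJ z hb₂)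
  exact ⟨υ, hb₁, ζ, hb₂, htb⟩

variable {Pi : Set ZFSet} (hS : IsPartition S)
  (hPi1 : ∀ b ∈ Pi, ∃ p, p ∈ S ∧ ∃ q, q ∈ S ∧ b = ({p, q} : ZFSet))
  (hPi2 : (⋃ c ∈ sigmaOtimes S, c.toSet) = ⋃ b ∈ Pi, powAst12 b)
include hS hPi1 hPi2

lemma inducedT_nonempty_and_subset {υ ζ : P} (hυ : υ ∈ inducedF e J y)
    (hζ : ζ ∈ inducedF e J z) :
    (inducedT S e Pi {υ, ζ}).Nonempty ∧ inducedT S e Pi {υ, ζ} ⊆ inducedF e J x := by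
  constructor
  · obtain ⟨u, hu⟩ := hS.exists_mem (e υ).2
    obtain ⟨v, hv⟩ := hS.exists_mem (e ζ).2
    have huv : ({u, v} : ZFSet) ∈ uprod (e υ) (e ζ) := ⟨u, hu, v, hv, rfl⟩
    obtain ⟨c, hc, htc⟩ := ZFSet.mem_sUnion.1 (mem_sUnion_of_mem_uprod hm hυ hζ huv)
    obtain ⟨q, rfl⟩ := exists_place_eq e (hJ x hc)
    exact ⟨q, (mem_inducedT_pair_iff e hS hPi1 hPi2).2
      ⟨mem_sigmaOtimes_of_mem_inducedF hJ hm hc, _, htc, huv⟩⟩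
  · intro q hq
    obtain ⟨-, t, ht, htp⟩ := (mem_inducedT_pair_iff e hS hPi1 hPi2).1 hq
    exact (mem_inducedF_iff hJ hS ht).2 (mem_sUnion_of_mem_uprod hm hυ hζ htp)

lemma inducedF_subset_biUnion_inducedT :
    inducedF e J x ⊆ ⋃ A ∈ setUprod (inducedF e J y) (inducedF e J z), inducedT S e Pi A := by
  intro q hq
  obtain ⟨t, ht⟩ := hS.exists_mem (e q).2
  obtain ⟨υ, hυ, ζ, hζ, htp⟩ := exists_places_of_mem_inducedF hJ hm hq ht
  exact Set.mem_biUnion ⟨υ, hυ, ζ, hζ, rfl⟩ ((mem_inducedT_pair_iff e hS hPi1 hPi2).2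
    ⟨mem_sigmaOtimes_of_mem_inducedF hJ hm hq, t, ht, htp⟩)

lemma biUnion_inducedT_inter_inducedF_eq_empty :
    (⋃ A ∈ NodesOf P \ setUprod (inducedF e J y) (inducedF e J z), inducedT S e Pi A) ∩
      inducedF e J x = ∅ := by
  refine Set.eq_empty_iff_forall_notMem.2 fun q ⟨hqT, hq⟩ => ?_
  obtain ⟨A, ⟨⟨p₁, p₂, rfl⟩, hA⟩, hqA⟩ := Set.mem_iUnion₂.1 hqT
  obtain ⟨-, t, ht, htp⟩ := (mem_inducedT_pair_iff e hS hPi1 hPi2).1 hqA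
  obtain ⟨υ, hυ, ζ, hζ, htυζ⟩ := exists_places_of_mem_inducedF hJ hm hq ht
  have hpair := hS.pair_eq_of_mem_uprod (e p₁).2 (e p₂).2 (e υ).2 (e ζ).2 htp htυζ
  exact hA ⟨υ, hυ, ζ, hζ, (pair_eq_pair_iff_of_injective (place_injective e)).1 hpair⟩

end Uprod

end Fulfillment

/-- if a partition `S` satisfies a BST⊗-conjunction `Φ` via the
partition assignment `J`, then the induced ⊗-graph fulfills `Φ` via the map
`x ↦ { q : q• ∈ J x }`. -/
theorem stmt12 {V : Type} (Φ : List (Lit V)) (S : ZFSet) (hS : IsPartition S)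
    (J : V → ZFSet) (hJ : ∀ v, J v ⊆ S)
    (hsat : ∀ l ∈ Φ, Lit.Sat (fun v => ZFSet.sUnion (J v)) l)
    {P : Type} (e : P ≃ S.toSet) (Pi : Set ZFSet)
    (hPi1 : ∀ b ∈ Pi, ∃ p, p ∈ S ∧ ∃ q, q ∈ S ∧ b = ({p, q} : ZFSet))
    (hPi2 : (⋃ c ∈ sigmaOtimes S, c.toSet) = ⋃ b ∈ Pi, powAst12 b) :
    Fulfills (inducedT S e Pi) (fun x => {q : P | (e q : ZFSet) ∈ J x}) Φ := by
  intro l hl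
  have hl := hsat l hl
  cases l with
  | eqUnion x y z => exact inducedF_eq_union hJ hS hl
  | eqDiff x y z => exact inducedF_eq_diff hJ hS hl
  | ne x y => exact fun h => hl (congrArg ZFSet.sUnion (eq_of_inducedF_eq hJ h))
  | eqUprod x y z =>
    exact ⟨fun υ hυ ζ hζ => inducedT_nonempty_and_subset hJ hl hS hPi1 hPi2 hυ hζ,
      inducedF_subset_biUnion_inducedT hJ hl hS hPi1 hPi2,
      biUnion_inducedT_inter_inducedF_eq_empty hJ hl hS hPi1 hPi2⟩

end BSTO
end
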